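/- arXiv:2109.09048 — 2 statements merged into one kernel-verified Lean document; each statement's English description precedes it below -/
import Mathlib

section
/- Let p, N be positive integers, let A be a real p×N matrix such that A Aᵀ is invertible, and set V = (A Aᵀ)⁻¹. Let σ > 0 and let g ∈ ℝᵖ. Let T : ℝᴺ → ℝ be an estimator of gᵀγ that is square-integrable with respect to the Gaussian measure N(Aᵀγ, σ²I_N) on ℝᴺ for every γ ∈ ℝᵖ, and let u : ℝᴺ → ℝ be a non-negative function. Then at least one of the following two statements is true: (1) T is biased, i.e., there exists γ ∈ ℝᵖ such that the expectation of T under y ∼ N(Aᵀγ, σ²I_N) differs from gᵀγ; (2) for every γ ∈ ℝᵖ and every y' ∈ ℝᴺ with u(y')² < σ² gᵀ V g, one also has u(y')² < E_{y ∼ N(Aᵀγ, σ²I_N)}[(T(y) − gᵀγ)²], i.e., u(y') is smaller than the root mean squared error of T under repeated sampling. -/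
open MeasureTheory Matrix Real

noncomputable def gaussianPi (N : ℕ) (μ : Fin N → ℝ) (σ : ℝ) : Measure (Fin N → ℝ) :=
  volume.withDensity (fun y => ENNReal.ofReal
    ((2 * Real.pi * σ ^ 2) ^ (-(N : ℝ) / 2) *
      Real.exp (- (∑ i, (y i - μ i) ^ 2) / (2 * σ ^ 2))))

/-!
The likelihood ratio `ρ` of `N(m + v, σ²I)` against `N(m, σ²I)` has mean `1` and second moment
`exp (‖v‖² / σ²)`, and `E_{m+v} T - E_m T = cov_m (T, ρ)`. Cauchy–Schwarz therefore gives the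
Hammersley–Chapman–Robbins bound `(E_{m+v} T - E_m T)² ≤ Var_m T · (exp (‖v‖² / σ²) - 1)`.
For an unbiased `T`, moving `γ` to `γ + t V g` moves the mean `Aᵀ γ` by `t Aᵀ V g`, whose squared
norm is `t² gᵀ V g`, and moves `E T` by `t gᵀ V g`; letting `t → 0` gives the Cramér–Rao bound
`σ² gᵀ V g ≤ Var T`, and the mean squared error of an unbiased estimator is its variance.
-/

open ProbabilityTheory

theorem sq_integral_mul_le_integral_sq_mul_integral_sq {α : Type*} [MeasurableSpace α]
    {μ : Measure α} {f g : α → ℝ} (hf : MemLp f 2 μ) (hg : MemLp g 2 μ) :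
    (∫ a, f a * g a ∂μ) ^ 2 ≤ (∫ a, f a ^ 2 ∂μ) * ∫ a, g a ^ 2 ∂μ := by
  have inner_toLp : ∀ {u v : α → ℝ} (hu : MemLp u 2 μ) (hv : MemLp v 2 μ),
      inner ℝ (hu.toLp u) (hv.toLp v) = ∫ a, u a * v a ∂μ := by
    intro u v hu hv
    rw [L2.inner_def]
    refine integral_congr_ae ?_
    filter_upwards [hu.coeFn_toLp, hv.coeFn_toLp] with a hua hva
    rw [hua, hva, real_inner_eq_re_inner]
    simp [mul_comm]
  simpa only [inner_toLp, sq] using real_inner_mul_inner_self_le (hf.toLp f) (hg.toLp g)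

theorem covariance_sq_le_variance_mul_variance {Ω : Type*} [MeasurableSpace Ω] {μ : Measure Ω}
    [IsFiniteMeasure μ] {X Y : Ω → ℝ} (hX : MemLp X 2 μ) (hY : MemLp Y 2 μ) :
    cov[X, Y; μ] ^ 2 ≤ Var[X; μ] * Var[Y; μ] := by
  rw [covariance, variance_eq_integral hX.aemeasurable, variance_eq_integral hY.aemeasurable]
  exact sq_integral_mul_le_integral_sq_mul_integral_sq (hX.sub (memLp_const _))
    (hY.sub (memLp_const _))

lemma exp_sub_one_le_mul_exp (x : ℝ) : exp x - 1 ≤ x * exp x := by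
  have h := mul_le_mul_of_nonneg_right (one_sub_le_exp_neg x) (exp_pos x).le
  rw [← exp_add, neg_add_cancel, exp_zero] at h
  linarith

theorem le_mul_of_forall_sq_le_mul_exp_sub_one {β M c : ℝ} (hM : 0 ≤ M)
    (h : ∀ t : ℝ, 0 < t → (t * β) ^ 2 ≤ M * (exp (t ^ 2 * c) - 1)) : β ^ 2 ≤ M * c := by
  have hbound : ∀ t : ℝ, 0 < t → β ^ 2 ≤ M * c * exp (t ^ 2 * c) := by
    intro t ht
    have ht2 : 0 < t ^ 2 := by positivity
    have hle := (h t ht).trans (mul_le_mul_of_nonneg_left (exp_sub_one_le_mul_exp _) hM)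
    nlinarith
  have hlim : Filter.Tendsto (fun t : ℝ => M * c * exp (t ^ 2 * c)) (nhdsWithin 0 (Set.Ioi 0))
      (nhds (M * c)) := by
    have hcont : Continuous (fun t : ℝ => M * c * exp (t ^ 2 * c)) := by fun_prop
    simpa using (hcont.tendsto 0).mono_left nhdsWithin_le_nhds
  exact ge_of_tendsto hlim (eventually_nhdsWithin_of_forall hbound)

noncomputable def gaussianPiPDFReal (N : ℕ) (m : Fin N → ℝ) (σ : ℝ) (y : Fin N → ℝ) : ℝ :=
  (2 * π * σ ^ 2) ^ (-(N : ℝ) / 2) * exp (-(∑ i, (y i - m i) ^ 2) / (2 * σ ^ 2))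

noncomputable def gaussianPiLikelihoodRatio {N : ℕ} (σ : ℝ) (m v y : Fin N → ℝ) : ℝ :=
  exp ((v ⬝ᵥ (y - m)) / σ ^ 2 - (v ⬝ᵥ v) / (2 * σ ^ 2))

section GaussianPi

variable {N : ℕ} {σ : ℝ}

lemma gaussianPi_def (m : Fin N → ℝ) :
    gaussianPi N m σ = volume.withDensity fun y => ENNReal.ofReal (gaussianPiPDFReal N m σ y) :=
  rfl

@[fun_prop]
lemma measurable_gaussianPiPDFReal (m : Fin N → ℝ) : Measurable (gaussianPiPDFReal N m σ) := by
  unfold gaussianPiPDFReal; fun_prop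

@[fun_prop]
lemma measurable_gaussianPiLikelihoodRatio (m v : Fin N → ℝ) :
    Measurable (gaussianPiLikelihoodRatio σ m v) := by
  unfold gaussianPiLikelihoodRatio dotProduct; fun_prop

lemma gaussianPiPDFReal_eq_prod (hσ : σ ≠ 0) (m y : Fin N → ℝ) :
    gaussianPiPDFReal N m σ y = ∏ i, gaussianPDFReal (m i) (σ ^ 2).toNNReal (y i) := by
  have h2πσ : 0 < 2 * π * σ ^ 2 := by positivity
  simp only [gaussianPDFReal, Real.coe_toNNReal _ (sq_nonneg σ), Finset.prod_mul_distrib,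
    Finset.prod_const, Finset.card_univ, Fintype.card_fin, ← exp_sum, gaussianPiPDFReal]
  congr 1
  · rw [sqrt_eq_rpow, ← rpow_neg h2πσ.le, ← rpow_mul_natCast h2πσ.le]
    ring_nf
  · rw [← Finset.sum_div, Finset.sum_neg_distrib]

theorem isProbabilityMeasure_gaussianPi (hσ : σ ≠ 0) (m : Fin N → ℝ) :
    IsProbabilityMeasure (gaussianPi N m σ) := by
  have hv : (σ ^ 2).toNNReal ≠ 0 := by simpa using hσ
  have hint : Integrable (gaussianPiPDFReal N m σ) := by
    simp_rw [funext (gaussianPiPDFReal_eq_prod hσ m)]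
    exact Integrable.fintype_prod fun i => integrable_gaussianPDFReal (m i) _
  constructor
  rw [gaussianPi_def, withDensity_apply _ MeasurableSet.univ, Measure.restrict_univ,
    ← ofReal_integral_eq_lintegral_ofReal hint (.of_forall fun y => ?_)]
  · simp_rw [gaussianPiPDFReal_eq_prod hσ m]
    rw [integral_fintype_prod_volume_eq_prod (f := fun i x => gaussianPDFReal (m i) _ x)]
    simp [integral_gaussianPDFReal_eq_one _ hv]
  · unfold gaussianPiPDFReal; positivity

lemma gaussianPiPDFReal_add (hσ : σ ≠ 0) (m v y : Fin N → ℝ) :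
    gaussianPiPDFReal N (m + v) σ y =
      gaussianPiPDFReal N m σ y * gaussianPiLikelihoodRatio σ m v y := by
  have hsum : ∑ i, (y i - (m + v) i) ^ 2 = ∑ i, (y i - m i) ^ 2 - 2 * (v ⬝ᵥ (y - m)) + v ⬝ᵥ v := by
    simp only [dotProduct, Pi.add_apply, Pi.sub_apply, Finset.mul_sum, ← Finset.sum_sub_distrib,
      ← Finset.sum_add_distrib]
    exact Finset.sum_congr rfl fun i _ => by ring
  simp only [gaussianPiPDFReal, gaussianPiLikelihoodRatio, mul_assoc, ← exp_add, hsum]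
  congr 2
  field_simp
  ring

theorem gaussianPi_add (hσ : σ ≠ 0) (m v : Fin N → ℝ) :
    gaussianPi N (m + v) σ =
      (gaussianPi N m σ).withDensity
        fun y => ENNReal.ofReal (gaussianPiLikelihoodRatio σ m v y) := by
  rw [gaussianPi_def, gaussianPi_def, ← withDensity_mul _ (by fun_prop) (by fun_prop)]
  congr with y
  rw [Pi.mul_apply, gaussianPiPDFReal_add hσ, ENNReal.ofReal_mul]
  unfold gaussianPiPDFReal; positivity

theorem integral_gaussianPi_add (hσ : σ ≠ 0) (m v : Fin N → ℝ) (f : (Fin N → ℝ) → ℝ) :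
    ∫ y, f y ∂gaussianPi N (m + v) σ =
      ∫ y, gaussianPiLikelihoodRatio σ m v y * f y ∂gaussianPi N m σ := by
  rw [gaussianPi_add hσ, integral_withDensity_eq_integral_toReal_smul (by fun_prop)
    (.of_forall fun _ => ENNReal.ofReal_lt_top)]
  simp only [ENNReal.toReal_ofReal (exp_pos _).le, gaussianPiLikelihoodRatio, smul_eq_mul]

lemma integral_gaussianPiLikelihoodRatio (hσ : σ ≠ 0) (m v : Fin N → ℝ) :
    ∫ y, gaussianPiLikelihoodRatio σ m v y ∂gaussianPi N m σ = 1 := by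
  have := isProbabilityMeasure_gaussianPi hσ (m + v)
  simpa using (integral_gaussianPi_add hσ m v fun _ => 1).symm

lemma gaussianPiLikelihoodRatio_sq (m v y : Fin N → ℝ) :
    gaussianPiLikelihoodRatio σ m v y ^ 2 =
      exp ((v ⬝ᵥ v) / σ ^ 2) * gaussianPiLikelihoodRatio σ m (2 • v) y := by
  simp only [gaussianPiLikelihoodRatio, ← exp_nat_mul, ← exp_add, smul_dotProduct,
    dotProduct_smul]
  congr 1
  push_cast
  ring

lemma integral_gaussianPiLikelihoodRatio_sq (hσ : σ ≠ 0) (m v : Fin N → ℝ) :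
    ∫ y, gaussianPiLikelihoodRatio σ m v y ^ 2 ∂gaussianPi N m σ = exp ((v ⬝ᵥ v) / σ ^ 2) := by
  simp only [gaussianPiLikelihoodRatio_sq, integral_const_mul,
    integral_gaussianPiLikelihoodRatio hσ, mul_one]

lemma memLp_gaussianPiLikelihoodRatio (hσ : σ ≠ 0) (m v : Fin N → ℝ) :
    MemLp (gaussianPiLikelihoodRatio σ m v) 2 (gaussianPi N m σ) := by
  refine (memLp_two_iff_integrable_sq (by fun_prop)).2 (.of_integral_ne_zero ?_)
  rw [integral_gaussianPiLikelihoodRatio_sq hσ]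
  exact (exp_pos _).ne'

theorem sq_integral_gaussianPi_add_sub_le (hσ : σ ≠ 0) (m v : Fin N → ℝ)
    {T : (Fin N → ℝ) → ℝ} (hT : MemLp T 2 (gaussianPi N m σ)) :
    (∫ y, T y ∂gaussianPi N (m + v) σ - ∫ y, T y ∂gaussianPi N m σ) ^ 2 ≤
      Var[T; gaussianPi N m σ] * (exp ((v ⬝ᵥ v) / σ ^ 2) - 1) := by
  have := isProbabilityMeasure_gaussianPi hσ m
  have hρ := memLp_gaussianPiLikelihoodRatio hσ m v
  calc (∫ y, T y ∂gaussianPi N (m + v) σ - ∫ y, T y ∂gaussianPi N m σ) ^ 2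
      = cov[T, gaussianPiLikelihoodRatio σ m v; gaussianPi N m σ] ^ 2 := by
        rw [covariance_eq_sub hT hρ, integral_gaussianPi_add hσ,
          integral_gaussianPiLikelihoodRatio hσ, mul_one]
        simp only [Pi.mul_apply, mul_comm]
    _ ≤ Var[T; gaussianPi N m σ] * Var[gaussianPiLikelihoodRatio σ m v; gaussianPi N m σ] :=
        covariance_sq_le_variance_mul_variance hT hρ
    _ = Var[T; gaussianPi N m σ] * (exp ((v ⬝ᵥ v) / σ ^ 2) - 1) := by
        rw [variance_eq_sub hρ, integral_gaussianPiLikelihoodRatio hσ]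
        simp only [Pi.pow_apply, integral_gaussianPiLikelihoodRatio_sq hσ, one_pow]

end GaussianPi

theorem sq_mul_dotProduct_inv_mulVec_le_variance {p N : ℕ} {A : Matrix (Fin p) (Fin N) ℝ}
    (hA : IsUnit (A * Aᵀ).det) {σ : ℝ} (hσ : σ ≠ 0) (g : Fin p → ℝ) {T : (Fin N → ℝ) → ℝ}
    (hT : ∀ γ, MemLp T 2 (gaussianPi N (Aᵀ *ᵥ γ) σ))
    (hunbiased : ∀ γ, ∫ y, T y ∂gaussianPi N (Aᵀ *ᵥ γ) σ = g ⬝ᵥ γ) (γ : Fin p → ℝ) :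
    σ ^ 2 * (g ⬝ᵥ (A * Aᵀ)⁻¹ *ᵥ g) ≤ Var[T; gaussianPi N (Aᵀ *ᵥ γ) σ] := by
  set w := Aᵀ *ᵥ ((A * Aᵀ)⁻¹ *ᵥ g)
  have hw : w ⬝ᵥ w = g ⬝ᵥ (A * Aᵀ)⁻¹ *ᵥ g := by
    rw [dotProduct_mulVec, vecMul_transpose, mulVec_mulVec, mulVec_mulVec,
      mul_nonsing_inv _ hA, one_mulVec]
  set β := g ⬝ᵥ (A * Aᵀ)⁻¹ *ᵥ g
  set μ := gaussianPi N (Aᵀ *ᵥ γ) σ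
  have hHCR : ∀ t : ℝ, 0 < t → (t * β) ^ 2 ≤ Var[T; μ] * (exp (t ^ 2 * (β / σ ^ 2)) - 1) := by
    intro t _
    have hshift : Aᵀ *ᵥ γ + t • w = Aᵀ *ᵥ (γ + t • (A * Aᵀ)⁻¹ *ᵥ g) := by
      rw [mulVec_add, mulVec_smul]
    have hmean : g ⬝ᵥ (γ + t • (A * Aᵀ)⁻¹ *ᵥ g) - g ⬝ᵥ γ = t * β := by
      rw [dotProduct_add, dotProduct_smul, smul_eq_mul, add_sub_cancel_left]
    have hnorm : (t • w) ⬝ᵥ (t • w) / σ ^ 2 = t ^ 2 * (β / σ ^ 2) := by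
      rw [smul_dotProduct, dotProduct_smul, hw, smul_eq_mul, smul_eq_mul]
      ring
    have h := sq_integral_gaussianPi_add_sub_le hσ (Aᵀ *ᵥ γ) (t • w) (hT γ)
    rwa [hshift, hunbiased, hunbiased, hmean, hnorm] at h
  have hCR : β ^ 2 * σ ^ 2 ≤ Var[T; μ] * β := by
    have h := le_mul_of_forall_sq_le_mul_exp_sub_one (variance_nonneg T μ) hHCR
    rwa [mul_div_assoc', le_div_iff₀ (by positivity)] at h
  have hβ : 0 ≤ β := hw ▸ Finset.sum_nonneg fun i _ => mul_self_nonneg (w i)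
  rcases hβ.eq_or_lt with hβ0 | hβpos
  · rw [← hβ0, mul_zero]
    exact variance_nonneg T μ
  · nlinarith

theorem stmt0_general (p N : ℕ)
    (A : Matrix (Fin p) (Fin N) ℝ) (hA : IsUnit (A * Aᵀ).det)
    (σ : ℝ) (hσ : 0 < σ) (g : Fin p → ℝ)
    (V : Matrix (Fin p) (Fin p) ℝ) (hV : V = (A * Aᵀ)⁻¹)
    (T : (Fin N → ℝ) → ℝ)
    (hT : ∀ γ : Fin p → ℝ, MemLp T 2 (gaussianPi N (Aᵀ.mulVec γ) σ))
    (u : (Fin N → ℝ) → ℝ) :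
    (∃ γ : Fin p → ℝ, ∫ y, T y ∂(gaussianPi N (Aᵀ.mulVec γ) σ) ≠ g ⬝ᵥ γ) ∨
    (∀ (γ : Fin p → ℝ) (y' : Fin N → ℝ),
      u y' ^ 2 < σ ^ 2 * (g ⬝ᵥ V.mulVec g) →
      u y' ^ 2 < ∫ y, (T y - g ⬝ᵥ γ) ^ 2 ∂(gaussianPi N (Aᵀ.mulVec γ) σ)) := by
  refine or_iff_not_imp_left.2 fun hunbiased γ y' hu => ?_
  push Not at hunbiased
  have hmse : Var[T; gaussianPi N (Aᵀ *ᵥ γ) σ] =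
      ∫ y, (T y - g ⬝ᵥ γ) ^ 2 ∂gaussianPi N (Aᵀ *ᵥ γ) σ := by
    rw [variance_eq_integral (hT γ).aemeasurable, hunbiased γ]
  subst hV
  exact hmse ▸ hu.trans_le (sq_mul_dotProduct_inv_mulVec_le_variance hA hσ.ne' g hT hunbiased γ)

theorem stmt0 (p N : ℕ) (hp : 0 < p) (hN : 0 < N)
    (A : Matrix (Fin p) (Fin N) ℝ) (hA : IsUnit (A * Aᵀ).det)
    (σ : ℝ) (hσ : 0 < σ) (g : Fin p → ℝ)
    (V : Matrix (Fin p) (Fin p) ℝ) (hV : V = (A * Aᵀ)⁻¹)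
    (T : (Fin N → ℝ) → ℝ)
    (hT : ∀ γ : Fin p → ℝ, MemLp T 2 (gaussianPi N (Aᵀ.mulVec γ) σ))
    (u : (Fin N → ℝ) → ℝ) (hu : ∀ y, 0 ≤ u y) :
    (∃ γ : Fin p → ℝ, ∫ y, T y ∂(gaussianPi N (Aᵀ.mulVec γ) σ) ≠ g ⬝ᵥ γ) ∨
    (∀ (γ : Fin p → ℝ) (y' : Fin N → ℝ),
      u y' ^ 2 < σ ^ 2 * (g ⬝ᵥ V.mulVec g) →
      u y' ^ 2 < ∫ y, (T y - g ⬝ᵥ γ) ^ 2 ∂(gaussianPi N (Aᵀ.mulVec γ) σ)) :=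
  stmt0_general p N A hA σ hσ g V hV T hT u
end

section
/- (Exact probability matching of the anchor model.) Let p, N be positive integers, let A be a real p×N matrix with A Aᵀ invertible, set V = (A Aᵀ)⁻¹, fix γ ∈ ℝᵖ, σ > 0 and g ∈ ℝᵖ with gᵀ V g > 0, and write u = σ √(gᵀ V g). Then for every z > 0, the probability under y ∼ N(Aᵀγ, σ²I_N) that |gᵀ V A y − gᵀγ| ≤ z·u equals the measure of the interval [−z, z] under the standard Gaussian N(0,1) on ℝ. In particular, the credible interval gᵀγ̂ ± z·u, which has posterior credibility Φ(z) − Φ(−z) under the flat-prior posterior N(γ̂, σ²V), has frequentist coverage probability exactly Φ(z) − Φ(−z) under repeated sampling of y. -/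
/-!
The density of `N(μ, σ² I)` factors over the coordinates, so `y` has independent coordinates
`yᵢ ∼ N((Aᵀγ)ᵢ, σ²)`. The statistic `gᵀ V A y` is the linear form `w ⬝ᵥ y` with `w = gᵀ V A`, hence
Gaussian with mean `w ⬝ᵥ Aᵀγ = gᵀγ` (as `V A Aᵀ = 1`) and variance `σ² ‖w‖² = σ² gᵀ V g = u²`
(as `V A Aᵀ V = V`). Standardising turns the event `|w ⬝ᵥ y - gᵀγ| ≤ z u` into `[-z, z]`.
-/

open MeasureTheory Matrix Real ProbabilityTheory

open scoped NNReal

theorem MeasureTheory.Measure.pi_withDensity_ofReal {ι : Type*} [Fintype ι] {α : ι → Type*}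
    [∀ i, MeasurableSpace (α i)] (μ : ∀ i, Measure (α i)) [∀ i, SigmaFinite (μ i)]
    {f : ∀ i, α i → ℝ} (hf : ∀ i, Integrable (f i) (μ i)) (hf0 : ∀ i, 0 ≤ f i) :
    Measure.pi (fun i ↦ (μ i).withDensity fun t ↦ ENNReal.ofReal (f i t)) =
      (Measure.pi μ).withDensity fun x ↦ ENNReal.ofReal (∏ i, f i (x i)) := by
  have := fun i ↦ isFiniteMeasure_withDensity_ofReal (hf i).2
  refine Measure.pi_eq fun s hs ↦ ?_
  rw [withDensity_apply _ (MeasurableSet.univ_pi hs), Measure.restrict_pi_pi,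
    ← ofReal_integral_eq_lintegral_ofReal
      (Integrable.fintype_prod_dep fun i ↦ (hf i).restrict)
      (.of_forall fun x ↦ Finset.prod_nonneg fun i _ ↦ hf0 i (x i)),
    integral_fintype_prod_eq_prod, ENNReal.ofReal_prod_of_nonneg
      fun i _ ↦ integral_nonneg (hf0 i)]
  refine Finset.prod_congr rfl fun i _ ↦ ?_
  rw [withDensity_apply _ (hs i), ofReal_integral_eq_lintegral_ofReal (hf i).restrict
    (.of_forall (hf0 i))]

lemma rpow_neg_natCast_div_two_eq_inv_sqrt_pow {a : ℝ} (ha : 0 ≤ a) (N : ℕ) :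
    a ^ (-(N : ℝ) / 2) = (√a)⁻¹ ^ N := by
  rw [sqrt_eq_rpow, ← rpow_neg ha, ← rpow_natCast, ← rpow_mul ha]
  ring_nf

lemma gaussianPi_density_eq_prod {N : ℕ} (μ : Fin N → ℝ) (σ : ℝ) (y : Fin N → ℝ) :
    (2 * π * σ ^ 2) ^ (-(N : ℝ) / 2) * exp (-(∑ i, (y i - μ i) ^ 2) / (2 * σ ^ 2)) =
      ∏ i, gaussianPDFReal (μ i) (σ ^ 2).toNNReal (y i) := by
  rw [rpow_neg_natCast_div_two_eq_inv_sqrt_pow (by positivity)]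
  simp only [gaussianPDFReal, Real.coe_toNNReal _ (sq_nonneg σ), Finset.prod_mul_distrib,
    Finset.prod_const, Finset.card_univ, Fintype.card_fin, ← exp_sum, Finset.sum_div, neg_div,
    Finset.sum_neg_distrib]

lemma gaussianPi_eq_pi {N : ℕ} (μ : Fin N → ℝ) {σ : ℝ} (hσ : σ ≠ 0) :
    gaussianPi N μ σ = Measure.pi fun i ↦ gaussianReal (μ i) (σ ^ 2).toNNReal := by
  have hv : (σ ^ 2).toNNReal ≠ 0 := by positivity
  simp_rw [gaussianReal_of_var_ne_zero _ hv, gaussianPDF_def]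
  rw [Measure.pi_withDensity_ofReal _ (fun i ↦ integrable_gaussianPDFReal _ _)
    (fun i ↦ gaussianPDFReal_nonneg _ _), ← volume_pi, gaussianPi]
  simp_rw [gaussianPi_density_eq_prod]

lemma pi_gaussianReal_map_dotProduct {ι : Type*} [Fintype ι] (m : ι → ℝ) (v : ι → ℝ≥0)
    (w : ι → ℝ) :
    (Measure.pi fun i ↦ gaussianReal (m i) (v i)).map (w ⬝ᵥ ·) =
      gaussianReal (w ⬝ᵥ m) (∑ i, w i ^ 2 * v i).toNNReal := by
  set P := Measure.pi fun i ↦ gaussianReal (m i) (v i)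
  have hcoord (i : ι) : HasGaussianLaw (fun y : ι → ℝ ↦ w i * y i) P :=
    ((measurePreserving_eval _ i).hasLaw.hasGaussianLaw).fun_smul (w i)
  have hsum : HasGaussianLaw (fun y : ι → ℝ ↦ w ⬝ᵥ y) P :=
    iIndepFun.hasGaussianLaw_fun_sum hcoord (iIndepFun_pi fun i ↦ by fun_prop)
  have hmean : P[fun y ↦ w ⬝ᵥ y] = w ⬝ᵥ m := by
    simp only [dotProduct]
    rw [integral_finsetSum _ fun i _ ↦ (hcoord i).integrable]
    refine Finset.sum_congr rfl fun i _ ↦ ?_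
    rw [integral_const_mul, integral_eval, integral_id_gaussianReal]
  have hvar : Var[fun y ↦ w ⬝ᵥ y; P] = ∑ i, w i ^ 2 * v i := by
    have hfun : (fun y : ι → ℝ ↦ w ⬝ᵥ y) = ∑ i, fun y ↦ w i * y i := by
      ext y; simp [dotProduct]
    rw [hfun, variance_sum_pi fun i ↦ (memLp_id_gaussianReal 2).const_mul (w i) (f := fun t ↦ t)]
    exact Finset.sum_congr rfl fun i _ ↦ by
      rw [variance_const_mul (w i) (fun x ↦ x), variance_fun_id_gaussianReal]
  rw [hsum.map_eq_gaussianReal, hmean, hvar]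

lemma gaussianReal_setOf_abs_sub_le {s : ℝ} (hs : 0 < s) (c z : ℝ) :
    gaussianReal c (s ^ 2).toNNReal {t | |t - c| ≤ z * s} = gaussianReal 0 1 (Set.Icc (-z) z) := by
  have hmap : (gaussianReal 0 1).map (fun x ↦ s * x + c) = gaussianReal c (s ^ 2).toNNReal := by
    rw [show (fun x ↦ s * x + c) = (· + c) ∘ (s * ·) from rfl,
      ← Measure.map_map (measurable_add_const c) (measurable_const_mul s),
      gaussianReal_map_const_mul, gaussianReal_map_add_const]
    congr 1
    · ring
    · ext; simp [sq_nonneg]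
  rw [← hmap, Measure.map_apply (by fun_prop) (measurableSet_le (by fun_prop) (by fun_prop))]
  congr 1
  ext x
  rw [Set.mem_preimage, Set.mem_ofPred_eq, add_sub_cancel_right, abs_mul, abs_of_pos hs,
    mul_comm z, mul_le_mul_iff_right₀ hs, abs_le, Set.mem_Icc]

section LeastSquares

variable {K m n : Type*} [Field K] [Fintype m] [DecidableEq m] [Fintype n]

/-- `γ̂ = V A y = leastSquaresMatrix A *ᵥ y` is the least-squares estimate. -/
noncomputable def leastSquaresMatrix (A : Matrix m n K) : Matrix m n K := (A * Aᵀ)⁻¹ * A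

variable {A : Matrix m n K}

lemma leastSquaresMatrix_mul_transpose_self (hA : IsUnit (A * Aᵀ).det) :
    leastSquaresMatrix A * Aᵀ = 1 := by
  rw [leastSquaresMatrix, Matrix.mul_assoc, nonsing_inv_mul _ hA]

lemma leastSquaresMatrix_mul_transpose (hA : IsUnit (A * Aᵀ).det) :
    leastSquaresMatrix A * (leastSquaresMatrix A)ᵀ = (A * Aᵀ)⁻¹ := by
  rw [leastSquaresMatrix, transpose_mul, transpose_nonsing_inv, transpose_mul, transpose_transpose,
    ← Matrix.mul_assoc, Matrix.mul_assoc _ A, nonsing_inv_mul _ hA, Matrix.one_mul]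

lemma vecMul_leastSquaresMatrix_dotProduct_self (hA : IsUnit (A * Aᵀ).det) (g : m → K) :
    g ᵥ* leastSquaresMatrix A ⬝ᵥ g ᵥ* leastSquaresMatrix A = g ⬝ᵥ (A * Aᵀ)⁻¹ *ᵥ g := by
  nth_rw 2 [← mulVec_transpose]
  rw [dotProduct_mulVec, vecMul_vecMul, leastSquaresMatrix_mul_transpose hA, ← dotProduct_mulVec]

lemma vecMul_leastSquaresMatrix_dotProduct_transpose_mulVec (hA : IsUnit (A * Aᵀ).det)
    (g γ : m → K) :
    g ᵥ* leastSquaresMatrix A ⬝ᵥ Aᵀ *ᵥ γ = g ⬝ᵥ γ := by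
  rw [dotProduct_mulVec, vecMul_vecMul, leastSquaresMatrix_mul_transpose_self hA, vecMul_one]

end LeastSquares

theorem stmt6_general (p N : ℕ)
    (A : Matrix (Fin p) (Fin N) ℝ) (hA : IsUnit (A * Aᵀ).det)
    (V : Matrix (Fin p) (Fin p) ℝ) (hV : V = (A * Aᵀ)⁻¹)
    (γ : Fin p → ℝ) (σ : ℝ) (hσ : 0 < σ)
    (g : Fin p → ℝ) (hg : 0 < g ⬝ᵥ V.mulVec g)
    (u : ℝ) (hu : u = σ * Real.sqrt (g ⬝ᵥ V.mulVec g)) :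
    ∀ z : ℝ, 0 < z →
      gaussianPi N (Aᵀ.mulVec γ) σ
          {y | |g ⬝ᵥ V.mulVec (A.mulVec y) - g ⬝ᵥ γ| ≤ z * u} =
        gaussianReal 0 1 (Set.Icc (-z) z) := by
  intro z _
  subst hV
  set w := g ᵥ* leastSquaresMatrix A
  have hevent : {y | |g ⬝ᵥ (A * Aᵀ)⁻¹ *ᵥ (A *ᵥ y) - g ⬝ᵥ γ| ≤ z * u} =
      (w ⬝ᵥ ·) ⁻¹' {t | |t - g ⬝ᵥ γ| ≤ z * u} := by
    ext y
    rw [Set.mem_preimage, Set.mem_ofPred_eq, Set.mem_ofPred_eq, mulVec_mulVec, dotProduct_mulVec]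
    rfl
  have hvar : (∑ i, w i ^ 2 * ((σ ^ 2).toNNReal : ℝ)).toNNReal = (u ^ 2).toNNReal := by
    rw [hu, Real.coe_toNNReal _ (sq_nonneg σ), ← Finset.sum_mul, mul_pow, sq_sqrt hg.le,
      ← vecMul_leastSquaresMatrix_dotProduct_self hA, mul_comm]
    simp only [dotProduct, sq, w]
  rw [gaussianPi_eq_pi _ hσ.ne', hevent,
    ← Measure.map_apply (by fun_prop) (measurableSet_le (by fun_prop) measurable_const),
    pi_gaussianReal_map_dotProduct, vecMul_leastSquaresMatrix_dotProduct_transpose_mulVec hA, hvar]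
  exact gaussianReal_setOf_abs_sub_le (hu ▸ by positivity) _ _

/-- Exact probability matching of the anchor model: the interval
`gᵀγ̂ ± z·u` with `u = σ√(gᵀVg)` has frequentist coverage probability equal
to the standard normal measure of `[−z, z]`. -/
theorem stmt6 (p N : ℕ) (hp : 0 < p) (hN : 0 < N)
    (A : Matrix (Fin p) (Fin N) ℝ) (hA : IsUnit (A * Aᵀ).det)
    (V : Matrix (Fin p) (Fin p) ℝ) (hV : V = (A * Aᵀ)⁻¹)
    (γ : Fin p → ℝ) (σ : ℝ) (hσ : 0 < σ)
    (g : Fin p → ℝ) (hg : 0 < g ⬝ᵥ V.mulVec g)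
    (u : ℝ) (hu : u = σ * Real.sqrt (g ⬝ᵥ V.mulVec g)) :
    ∀ z : ℝ, 0 < z →
      gaussianPi N (Aᵀ.mulVec γ) σ
          {y | |g ⬝ᵥ V.mulVec (A.mulVec y) - g ⬝ᵥ γ| ≤ z * u} =
        gaussianReal 0 1 (Set.Icc (-z) z) :=
  stmt6_general p N A hA V hV γ σ hσ g hg u hu
end
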